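/- Let G be a group, u ∈ G an element of order n₀ where n₀ is odd, and write u = P⁻¹C^{k′}P with 0 < k′ < n₀/2. For any real σ with σ < n₀/4, there exists a positive integer i < n₀/2 such that σ < i·k′ mod n₀ < n₀/2 (i.e., uⁱ = P⁻¹CᵏP with σ < k < n₀/2 where k ≡ i·k′ (mod n₀)). -/
import Mathlib


theorem stmt13 (n₀ k' : ℕ) (hodd : Odd n₀) (hk' : 0 < k')
    (hk'2 : 2 * k' < n₀) (σ : ℝ) (hσ : σ < (n₀ : ℝ) / 4) :
    ∃ i : ℕ, 1 ≤ i ∧ 2 * i < n₀ ∧ σ < ((i * k') % n₀ : ℕ) ∧ 2 * ((i * k') % n₀) < n₀ := by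
  have hn3 : 3 ≤ n₀ := by omega
  set S : Finset ℕ := (Finset.Ico 1 n₀).filter
    (fun i => 2 * i < n₀ ∧ 2 * ((i * k') % n₀) < n₀) with hS
  have h1S : 1 ∈ S := by
    simp only [hS, Finset.mem_filter, Finset.mem_Ico]
    have : (1 * k') % n₀ = k' := by
      rw [one_mul, Nat.mod_eq_of_lt (by omega)]
    omega
  obtain ⟨i₀, hi₀S, hmax⟩ := S.exists_max_image (fun i => (i * k') % n₀) ⟨1, h1S⟩
  simp only [hS, Finset.mem_filter, Finset.mem_Ico] at hi₀S
  obtain ⟨⟨hi₀1, hi₀n⟩, hi₀2, hi₀r⟩ := hi₀S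
  set M := (i₀ * k') % n₀ with hM
  have hk'M : k' ≤ M := by
    have := hmax 1 h1S
    simpa [Nat.mod_eq_of_lt (show k' < n₀ by omega)] using this
  -- key claim : n₀ < 4 * M
  have hkey : n₀ < 4 * M := by
    by_contra h4
    push_neg at h4
    have h4' : 4 * M < n₀ := by
      rcases hodd with ⟨m, hm⟩
      omega
    by_cases h2 : 2 * (i₀ + 1) < n₀
    · -- then i₀ + 1 ∈ S with bigger residue
      have hres : ((i₀ + 1) * k') % n₀ = M + k' := by
        have : (i₀ + 1) * k' = i₀ * k' + k' := by ring
        rw [this, Nat.add_mod, ← hM, Nat.mod_eq_of_lt (show k' < n₀ by omega),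
          Nat.mod_eq_of_lt (by omega)]
      have hmem : i₀ + 1 ∈ S := by
        simp only [hS, Finset.mem_filter, Finset.mem_Ico]
        refine ⟨⟨by omega, by omega⟩, h2, ?_⟩
        rw [hres]; omega
      have := hmax (i₀ + 1) hmem
      simp only [hres] at this
      omega
    · -- then 2 * i₀ = n₀ - 1
      have h2i : 2 * i₀ + 1 = n₀ := by
        rcases hodd with ⟨m, hm⟩
        omega
      have h2M : 2 * M = n₀ - k' := by
        have e1 : (2 * (i₀ * k')) % n₀ = (2 * M) % n₀ := by
          conv_lhs => rw [Nat.mul_mod]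
          conv_rhs => rw [Nat.mul_mod, hM, Nat.mod_mod_of_dvd _ dvd_rfl]
        have e2 : 2 * (i₀ * k') = (k' - 1) * n₀ + (n₀ - k') := by
          have : 2 * (i₀ * k') = (2 * i₀) * k' := by ring
          rw [this]
          have : (2 * i₀) * k' + k' = n₀ * k' := by
            rw [← h2i]; ring
          have hk'n : k' ≤ n₀ := by omega
          nlinarith [Nat.sub_add_cancel hk'n, Nat.sub_add_cancel (show 1 ≤ k' by omega)]
        have e3 : (2 * (i₀ * k')) % n₀ = n₀ - k' := by
          rw [e2, Nat.add_comm, Nat.add_mul_mod_self_right]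
          exact Nat.mod_eq_of_lt (by omega)
        have e4 : (2 * M) % n₀ = 2 * M := Nat.mod_eq_of_lt (by omega)
        omega
      omega
  refine ⟨i₀, hi₀1, hi₀2, ?_, hi₀r⟩
  have : (n₀ : ℝ) < 4 * (M : ℝ) := by exact_mod_cast hkey
  calc σ < (n₀ : ℝ) / 4 := hσ
    _ < M := by linarith
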